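/- Let I ⊆ ℝ be an open interval and D₁ ⊆ ℝ^{n_x}, D₂ ⊆ ℝ^{n_y} open sets. Let f : I × D₁ × D₂ → ℝ^{n_x} be continuously differentiable and uniformly Lipschitz continuous in (x,y), and let g : I × D₁ × D₂ → ℝ^{n_y} be twice continuously differentiable. Assume there is a linear subspace K ⊆ ℝ^{n_y} with ker ∂_y g(t,x,y) = K for all (t,x,y) ∈ I × D₁ × D₂, let Q : ℝ^{n_y} → ℝ^{n_y} be a linear projection with range Q = K and set P = Id − Q. Define h(t,x,y) = ∂_t g(t,x,y) + ∂_x g(t,x,y) f(t,x,y) and g̃(t,x,u,v) = h(t,x,u+Qv) + ∂_y g(t,x,u+Qv) v. Let t₀ ∈ I and (x₀,y₀) ∈ D₁ × D₂ satisfy g(t₀,x₀,y₀) = 0, and suppose there exists w₀ ∈ ℝ^{n_y} with h(t₀,x₀,y₀) + ∂_y g(t₀,x₀,y₀) w₀ = 0. Set u₀ = P y₀, v₀ = P w₀ + Q y₀, and assume the partial derivative ∂_v g̃(t₀,x₀,u₀,v₀) ∈ ℝ^{n_y × n_y} is invertible. Then there exist an open interval Ĩ with t₀ ∈ Ĩ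 ⊆ I and C¹ functions x : Ĩ → D₁, y : Ĩ → D₂ with x(t₀) = x₀, y(t₀) = y₀ which form a solution of the semi-explicit DAE on Ĩ, and this solution is locally unique. -/

import Mathlib

/-!
Because `ker ∂_y g ≡ K = range Q`, differentiating the constraint along a solution gives the
hidden constraint `h(t,x,y) + ∂_y g(t,x,y) y' = 0`, in which `y'` enters only through `P y'`.
With `u = P y` and `v = P y' + Q y` we have `y = u + Q v`, and the hidden constraint reads
`g̃(t,x,u,v) = 0`; since `∂_v g̃` is invertible, the implicit function theorem solves it as
`v = φ(t,x,u)`. Hence `(x, u)` solves the ODE `x' = f(t, x, u + Q φ)`, `u' = P φ`, which has a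
unique local solution by Picard–Lindelöf. Conversely, along the lift `y = u + Q φ(t,x,u)` of that
solution, `d/dt g(t,x,y) = g̃(t,x,u,φ) = 0` because `∂_y g` annihilates `Q (d/dt φ)`, so the
constraint holds since it holds at `t₀`.
-/

open Set

/-- The auxiliary function `h(t,x,y) = ∂_t g(t,x,y) + ∂_x g(t,x,y) f(t,x,y)`. -/
noncomputable def hAux {nx ny : ℕ}
    (f : ℝ → (Fin nx → ℝ) → (Fin ny → ℝ) → (Fin nx → ℝ))
    (g : ℝ → (Fin nx → ℝ) → (Fin ny → ℝ) → (Fin ny → ℝ))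
    (t : ℝ) (x : Fin nx → ℝ) (y : Fin ny → ℝ) : Fin ny → ℝ :=
  deriv (fun s => g s x y) t + fderiv ℝ (fun x' => g t x' y) x (f t x y)

/-- The reduced function `g̃(t,x,u,v) = h(t,x,u+Qv) + ∂_y g(t,x,u+Qv) v`. -/
noncomputable def gTilde {nx ny : ℕ}
    (f : ℝ → (Fin nx → ℝ) → (Fin ny → ℝ) → (Fin nx → ℝ))
    (g : ℝ → (Fin nx → ℝ) → (Fin ny → ℝ) → (Fin ny → ℝ))
    (Q : (Fin ny → ℝ) →L[ℝ] (Fin ny → ℝ))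
    (t : ℝ) (x : Fin nx → ℝ) (u v : Fin ny → ℝ) : Fin ny → ℝ :=
  hAux f g t x (u + Q v) + fderiv ℝ (fun y' => g t x y') (u + Q v) v

open Function Filter Topology

abbrev uncurry₃ {α β γ δ : Type*} (g : α → β → γ → δ) (p : α × β × γ) : δ := g p.1 p.2.1 p.2.2

section ODE

theorem HasDerivAt.fst {𝕜 E F : Type*} [NontriviallyNormedField 𝕜] [NormedAddCommGroup E]
    [NormedSpace 𝕜 E] [NormedAddCommGroup F] [NormedSpace 𝕜 F] {f : 𝕜 → E × F} {f' : E × F}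
    {x : 𝕜} (h : HasDerivAt f f' x) : HasDerivAt (fun s => (f s).1) f'.1 x :=
  (ContinuousLinearMap.fst 𝕜 E F).hasFDerivAt.comp_hasDerivAt x h

theorem HasDerivAt.snd {𝕜 E F : Type*} [NontriviallyNormedField 𝕜] [NormedAddCommGroup E]
    [NormedSpace 𝕜 E] [NormedAddCommGroup F] [NormedSpace 𝕜 F] {f : 𝕜 → E × F} {f' : E × F}
    {x : 𝕜} (h : HasDerivAt f f' x) : HasDerivAt (fun s => (f s).2) f'.2 x :=
  (ContinuousLinearMap.snd 𝕜 E F).hasFDerivAt.comp_hasDerivAt x h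

variable {E : Type*} [NormedAddCommGroup E] [NormedSpace ℝ E] {F : ℝ → E → E} {t₀ : ℝ} {z₀ : E}

theorem ContDiffAt.exists_eq_eventually_hasDerivAt [CompleteSpace E]
    (hF : ContDiffAt ℝ 1 (uncurry F) (t₀, z₀)) :
    ∃ α : ℝ → E, α t₀ = z₀ ∧ ∀ᶠ t in 𝓝 t₀, HasDerivAt α (F t (α t)) t := by
  -- adjoin time as a state variable to make the field autonomous
  obtain ⟨β, hβ₀, ε, hε, hβ⟩ :=
    (contDiffAt_const (c := (1 : ℝ))).prodMk hF
      |>.exists_forall_mem_closedBall_exists_eq_forall_mem_Ioo_hasDerivAt₀ t₀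
  have hβ₁ (t) (ht : t ∈ Ioo (t₀ - ε) (t₀ + ε)) : HasDerivAt (fun s => (β s).1) 1 t :=
    (hβ t ht).fst
  have hβ₂ (t) (ht : t ∈ Ioo (t₀ - ε) (t₀ + ε)) :
      HasDerivAt (fun s => (β s).2) (F (β t).1 (β t).2) t :=
    (hβ t ht).snd
  have ht₀ : t₀ ∈ Ioo (t₀ - ε) (t₀ + ε) := ⟨by linarith, by linarith⟩
  have htime : EqOn (fun t => (β t).1) id (Ioo (t₀ - ε) (t₀ + ε)) :=
    isOpen_Ioo.eqOn_of_deriv_eq isPreconnected_Ioo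
      (fun t ht => (hβ₁ t ht).differentiableAt.differentiableWithinAt)
      differentiableOn_id (fun t ht => by simp [(hβ₁ t ht).deriv]) ht₀ (by simp [hβ₀])
  refine ⟨fun t => (β t).2, congrArg Prod.snd hβ₀, ?_⟩
  filter_upwards [isOpen_Ioo.mem_nhds ht₀] with t ht
  simpa [htime ht] using hβ₂ t ht

theorem ODE_solution_unique_of_contDiffAt {α β : ℝ → E}
    (hF : ContDiffAt ℝ 1 (uncurry F) (t₀, z₀))
    (hα : ∀ᶠ t in 𝓝 t₀, HasDerivAt α (F t (α t)) t)
    (hβ : ∀ᶠ t in 𝓝 t₀, HasDerivAt β (F t (β t)) t)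
    (hα₀ : α t₀ = z₀) (hβ₀ : β t₀ = z₀) : α =ᶠ[𝓝 t₀] β := by
  obtain ⟨K, s, hs, hK⟩ := hF.exists_lipschitzOnWith
  have hslice (t : ℝ) : LipschitzOnWith K (F t) {z | (t, z) ∈ s} := by
    have h := hK.comp (LipschitzWith.prodMk_left t).lipschitzOnWith
      (s := {z | (t, z) ∈ s}) fun _ hz => hz
    rwa [mul_one] at h
  have hmem {γ : ℝ → E} (hγ : ∀ᶠ t in 𝓝 t₀, HasDerivAt γ (F t (γ t)) t) (hγ₀ : γ t₀ = z₀) :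
      ∀ᶠ t in 𝓝 t₀, HasDerivAt γ (F t (γ t)) t ∧ γ t ∈ {z | (t, z) ∈ s} := by
    refine hγ.and ((continuousAt_id.prodMk hγ.self_of_nhds.continuousAt).eventually_mem ?_)
    rwa [id, hγ₀]
  exact ODE_solution_unique_of_eventually (.of_forall hslice) (hmem hα hα₀) (hmem hβ hβ₀)
    (hα₀.trans hβ₀.symm)

theorem contDiffOn_one_of_hasDerivAt {J : Set ℝ} (hJ : IsOpen J) {α α' : ℝ → E}
    (hα : ∀ t ∈ J, HasDerivAt α (α' t) t) (hα' : ContinuousOn α' J) : ContDiffOn ℝ 1 α J := by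
  rw [show (1 : WithTop ℕ∞) = 0 + 1 from rfl, contDiffOn_succ_iff_deriv_of_isOpen hJ]
  exact ⟨fun t ht => (hα t ht).differentiableAt.differentiableWithinAt, by simp,
    contDiffOn_zero.2 (hα'.congr fun t ht => (hα t ht).deriv)⟩

end ODE

section Projection

variable {V W : Type*} [NormedAddCommGroup V] [NormedSpace ℝ V] [NormedAddCommGroup W]
  [NormedSpace ℝ W] {B : V →L[ℝ] W} {P Q : V →L[ℝ] V}

theorem ContinuousLinearMap.proj_add_apply_eq_self (hQ : Q.comp Q = Q)
    (hP : P = .id ℝ V - Q) (y w : V) : P y + Q (P w + Q y) = y := by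
  have hQQ (z : V) : Q (Q z) = Q z := DFunLike.congr_fun hQ z
  simp [hP, hQQ]

theorem ContinuousLinearMap.proj_apply_proj_add_apply (hQ : Q.comp Q = Q)
    (hP : P = .id ℝ V - Q) (y w : V) : P (P w + Q y) = P w := by
  have hQQ (z : V) : Q (Q z) = Q z := DFunLike.congr_fun hQ z
  simp [hP, hQQ]

theorem ContinuousLinearMap.apply_eq_zero_of_ker_eq_range
    (hB : LinearMap.ker (B : V →ₗ[ℝ] W) = LinearMap.range (Q : V →ₗ[ℝ] V)) (z : V) :
    B (Q z) = 0 :=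
  LinearMap.mem_ker.1 (hB ▸ LinearMap.mem_range_self _ z)

theorem ContinuousLinearMap.apply_eq_of_ker_eq_range
    (hB : LinearMap.ker (B : V →ₗ[ℝ] W) = LinearMap.range (Q : V →ₗ[ℝ] V))
    (hQ : Q.comp Q = Q) (hP : P = .id ℝ V - Q) {w w' : V} (h : B w = B w') : P w = P w' := by
  obtain ⟨z, hz⟩ : w - w' ∈ LinearMap.range (Q : V →ₗ[ℝ] V) := by
    rw [← hB, LinearMap.mem_ker]
    simp [h]
  have hQQ : Q (Q z) = Q z := DFunLike.congr_fun hQ z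
  rw [← sub_eq_zero, ← map_sub, ← show Q z = w - w' from hz, hP]
  simp [hQQ]

theorem ContinuousLinearMap.isInvertible_of_bijective {𝕜 E F : Type*} [NontriviallyNormedField 𝕜]
    [NormedAddCommGroup E] [NormedSpace 𝕜 E] [CompleteSpace E]
    [NormedAddCommGroup F] [NormedSpace 𝕜 F] [CompleteSpace F] {L : E →L[𝕜] F}
    (hL : Bijective L) : L.IsInvertible :=
  ⟨.ofBijective L (LinearMap.ker_eq_bot.2 hL.1) (LinearMap.range_eq_top.2 hL.2), rfl⟩

end Projection

section Calculus

variable {nx ny : ℕ} {f : ℝ → (Fin nx → ℝ) → (Fin ny → ℝ) → (Fin nx → ℝ)}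
  {g : ℝ → (Fin nx → ℝ) → (Fin ny → ℝ) → (Fin ny → ℝ)} {t : ℝ} {x : Fin nx → ℝ}

theorem hAux_eq_fderiv {y : Fin ny → ℝ} (hg : DifferentiableAt ℝ (uncurry₃ g) (t, x, y)) :
    hAux f g t x y = fderiv ℝ (uncurry₃ g) (t, x, y) (1, f t x y, 0) := by
  have ht : HasDerivAt (fun s => g s x y) (fderiv ℝ (uncurry₃ g) (t, x, y) (1, 0)) t := by
    have h := hg.hasFDerivAt.comp_hasDerivAt t
      ((hasDerivAt_id t).prodMk (hasDerivAt_const t (x, y)))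
    exact h
  have hx : HasFDerivAt (fun x' => g t x' y) ((fderiv ℝ (uncurry₃ g) (t, x, y)).comp
      ((ContinuousLinearMap.inr ℝ ℝ _).comp (ContinuousLinearMap.inl ℝ _ (Fin ny → ℝ)))) x := by
    have h := hg.hasFDerivAt.comp x
      ((hasFDerivAt_prodMk_right t (x, y)).comp x (hasFDerivAt_prodMk_left (𝕜 := ℝ) x y))
    exact h
  rw [hAux, ht.deriv, hx.fderiv, ContinuousLinearMap.comp_apply, ← map_add]
  simp

theorem fderiv_apply_eq_fderiv_uncurry₃ {y : Fin ny → ℝ}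
    (hg : DifferentiableAt ℝ (uncurry₃ g) (t, x, y)) (v : Fin ny → ℝ) :
    fderiv ℝ (fun y' => g t x y') y v = fderiv ℝ (uncurry₃ g) (t, x, y) (0, 0, v) := by
  have hy : HasFDerivAt (fun y' => g t x y') ((fderiv ℝ (uncurry₃ g) (t, x, y)).comp
      ((ContinuousLinearMap.inr ℝ ℝ _).comp (ContinuousLinearMap.inr ℝ (Fin nx → ℝ) _))) y := by
    have h := hg.hasFDerivAt.comp y
      ((hasFDerivAt_prodMk_right t (x, y)).comp y (hasFDerivAt_prodMk_right (𝕜 := ℝ) x y))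
    exact h
  rw [hy.fderiv]
  simp

theorem gTilde_eq_fderiv {Q : (Fin ny → ℝ) →L[ℝ] (Fin ny → ℝ)} {u v : Fin ny → ℝ}
    (hg : DifferentiableAt ℝ (uncurry₃ g) (t, x, u + Q v)) :
    gTilde f g Q t x u v = fderiv ℝ (uncurry₃ g) (t, x, u + Q v) (1, f t x (u + Q v), v) := by
  rw [gTilde, hAux_eq_fderiv hg, fderiv_apply_eq_fderiv_uncurry₃ hg, ← map_add]
  simp

theorem hasDerivAt_constraint {X : ℝ → Fin nx → ℝ} {Y : ℝ → Fin ny → ℝ} {w : Fin ny → ℝ}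
    (hg : DifferentiableAt ℝ (uncurry₃ g) (t, X t, Y t)) (hX : HasDerivAt X (f t (X t) (Y t)) t)
    (hY : HasDerivAt Y w t) :
    HasDerivAt (fun s => g s (X s) (Y s))
      (hAux f g t (X t) (Y t) + fderiv ℝ (fun y' => g t (X t) y') (Y t) w) t := by
  rw [hAux_eq_fderiv hg, fderiv_apply_eq_fderiv_uncurry₃ hg, ← map_add]
  have h := hg.hasFDerivAt.comp_hasDerivAt t ((hasDerivAt_id t).prodMk (hX.prodMk hY))
  simp only [id, Prod.mk_add_mk, add_zero, zero_add] at h ⊢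
  exact h

theorem hAux_add_fderiv_eq_zero {X : ℝ → Fin nx → ℝ} {Y : ℝ → Fin ny → ℝ} {w : Fin ny → ℝ}
    (hg : DifferentiableAt ℝ (uncurry₃ g) (t, X t, Y t)) (hX : HasDerivAt X (f t (X t) (Y t)) t)
    (hY : HasDerivAt Y w t) (h0 : ∀ᶠ s in 𝓝 t, g s (X s) (Y s) = 0) :
    hAux f g t (X t) (Y t) + fderiv ℝ (fun y' => g t (X t) y') (Y t) w = 0 :=
  (hasDerivAt_constraint hg hX hY).unique ((hasDerivAt_const t 0).congr_of_eventuallyEq h0)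

theorem proj_eq_of_hAux_add_fderiv_eq_zero {P Q : (Fin ny → ℝ) →L[ℝ] (Fin ny → ℝ)}
    {X : ℝ → Fin nx → ℝ} {Y : ℝ → Fin ny → ℝ} {w w₀ : Fin ny → ℝ}
    (hg : DifferentiableAt ℝ (uncurry₃ g) (t, X t, Y t)) (hX : HasDerivAt X (f t (X t) (Y t)) t)
    (hY : HasDerivAt Y w t) (h0 : ∀ᶠ s in 𝓝 t, g s (X s) (Y s) = 0)
    (hker : LinearMap.ker
        (fderiv ℝ (fun y' => g t (X t) y') (Y t) : (Fin ny → ℝ) →ₗ[ℝ] (Fin ny → ℝ)) =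
      LinearMap.range (Q : (Fin ny → ℝ) →ₗ[ℝ] (Fin ny → ℝ)))
    (hQ : Q.comp Q = Q) (hP : P = .id ℝ _ - Q)
    (hw₀ : hAux f g t (X t) (Y t) + fderiv ℝ (fun y' => g t (X t) y') (Y t) w₀ = 0) :
    P w = P w₀ :=
  ContinuousLinearMap.apply_eq_of_ker_eq_range hker hQ hP
    (add_left_cancel ((hAux_add_fderiv_eq_zero hg hX hY h0).trans hw₀.symm))

theorem contDiffAt_uncurry_gTilde {Q : (Fin ny → ℝ) →L[ℝ] (Fin ny → ℝ)} {u v : Fin ny → ℝ}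
    (hf : ContDiffAt ℝ 1 (uncurry₃ f) (t, x, u + Q v))
    (hg : ContDiffAt ℝ 2 (uncurry₃ g) (t, x, u + Q v)) :
    ContDiffAt ℝ 1 (fun q : (ℝ × (Fin nx → ℝ) × (Fin ny → ℝ)) × (Fin ny → ℝ) =>
      gTilde f g Q q.1.1 q.1.2.1 q.1.2.2 q.2) ((t, x, u), v) := by
  set σ : (ℝ × (Fin nx → ℝ) × (Fin ny → ℝ)) × (Fin ny → ℝ) → ℝ × (Fin nx → ℝ) × (Fin ny → ℝ) :=
    fun q => (q.1.1, q.1.2.1, q.1.2.2 + Q q.2)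
  have hσ : ContDiff ℝ 1 σ := by fun_prop
  -- `g̃` involves first derivatives of `g`, which is why `g` has to be `C²`
  have hrepr : ContDiffAt ℝ 1 (fun q => fderiv ℝ (uncurry₃ g) (σ q) (1, uncurry₃ f (σ q), q.2))
      ((t, x, u), v) :=
    ((hg.fderiv_right le_rfl).comp ((t, x, u), v) hσ.contDiffAt).clm_apply
      (contDiffAt_const.prodMk
        ((hf.comp (f := σ) ((t, x, u), v) hσ.contDiffAt).prodMk contDiffAt_snd))
  refine hrepr.congr_of_eventuallyEq ?_
  filter_upwards [hσ.continuous.continuousAt.eventually (hg.eventually (by simp))] with q hq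
  exact gTilde_eq_fderiv (hq.differentiableAt (by norm_num))

end Calculus

section Reduction

variable {nx ny : ℕ} {f : ℝ → (Fin nx → ℝ) → (Fin ny → ℝ) → (Fin nx → ℝ)}
  {g : ℝ → (Fin nx → ℝ) → (Fin ny → ℝ) → (Fin ny → ℝ)} {P Q : (Fin ny → ℝ) →L[ℝ] (Fin ny → ℝ)}
  {φ : ℝ × (Fin nx → ℝ) × (Fin ny → ℝ) → Fin ny → ℝ}

theorem exists_implicitFunction_gTilde {t : ℝ} {x : Fin nx → ℝ} {u v : Fin ny → ℝ}
    (hf : ContDiffAt ℝ 1 (uncurry₃ f) (t, x, u + Q v))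
    (hg : ContDiffAt ℝ 2 (uncurry₃ g) (t, x, u + Q v))
    (hinv : Bijective (fderiv ℝ (fun v => gTilde f g Q t x u v) v))
    (h0 : gTilde f g Q t x u v = 0) :
    ∃ φ : ℝ × (Fin nx → ℝ) × (Fin ny → ℝ) → Fin ny → ℝ,
      ContDiffAt ℝ 1 φ (t, x, u) ∧ φ (t, x, u) = v ∧
      (∀ᶠ a in 𝓝 (t, x, u), gTilde f g Q a.1 a.2.1 a.2.2 (φ a) = 0) ∧
      ∀ᶠ q in 𝓝 ((t, x, u), v), gTilde f g Q q.1.1 q.1.2.1 q.1.2.2 q.2 = 0 ↔ φ q.1 = q.2 := by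
  set G := fun q : (ℝ × (Fin nx → ℝ) × (Fin ny → ℝ)) × (Fin ny → ℝ) =>
    gTilde f g Q q.1.1 q.1.2.1 q.1.2.2 q.2
  have hG : ContDiffAt ℝ 1 G ((t, x, u), v) := contDiffAt_uncurry_gTilde hf hg
  have hinv' : (fderiv ℝ G ((t, x, u), v) ∘L .inr ℝ _ _).IsInvertible := by
    have h := (hG.differentiableAt one_ne_zero).hasFDerivAt.comp v
      (hasFDerivAt_prodMk_right (𝕜 := ℝ) (t, x, u) v)
    rw [← h.fderiv]
    exact ContinuousLinearMap.isInvertible_of_bijective hinv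
  refine ⟨hG.implicitFunction one_ne_zero hinv', hG.contDiffAt_implicitFunction one_ne_zero hinv',
    hG.implicitFunction_apply_self one_ne_zero hinv', ?_, ?_⟩
  · have h := hG.eventually_apply_implicitFunction one_ne_zero hinv'
    simp only [G, h0] at h
    exact h
  · have h := hG.eventually_apply_eq_iff_implicitFunction one_ne_zero hinv'
    simp only [G, h0] at h
    exact h

theorem gTilde_proj_eq {t : ℝ} {x : Fin nx → ℝ} {y w : Fin ny → ℝ}
    (hBQ : ∀ z, fderiv ℝ (fun y' => g t x y') y (Q z) = 0)
    (hQ : Q.comp Q = Q) (hP : P = .id ℝ _ - Q) :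
    gTilde f g Q t x (P y) (P w + Q y) = hAux f g t x y + fderiv ℝ (fun y' => g t x y') y w := by
  rw [gTilde, ContinuousLinearMap.proj_add_apply_eq_self hQ hP]
  simp [hP, hBQ]

def reducedField (f : ℝ → (Fin nx → ℝ) → (Fin ny → ℝ) → (Fin nx → ℝ))
    (P Q : (Fin ny → ℝ) →L[ℝ] (Fin ny → ℝ)) (φ : ℝ × (Fin nx → ℝ) × (Fin ny → ℝ) → Fin ny → ℝ)
    (t : ℝ) (z : (Fin nx → ℝ) × (Fin ny → ℝ)) : (Fin nx → ℝ) × (Fin ny → ℝ) :=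
  (f t z.1 (z.2 + Q (φ (t, z))), P (φ (t, z)))

theorem contDiffAt_uncurry_reducedField {a : ℝ × (Fin nx → ℝ) × (Fin ny → ℝ)}
    (hf : ContDiffAt ℝ 1 (uncurry₃ f) (a.1, a.2.1, a.2.2 + Q (φ a))) (hφ : ContDiffAt ℝ 1 φ a) :
    ContDiffAt ℝ 1 (uncurry (reducedField f P Q φ)) a := by
  have hσ : ContDiffAt ℝ 1 (fun b : ℝ × (Fin nx → ℝ) × (Fin ny → ℝ) =>
      (b.1, b.2.1, b.2.2 + Q (φ b))) a := by
    fun_prop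
  exact (hf.comp a hσ).prodMk (P.contDiff.contDiffAt.comp a hφ)

theorem hasDerivAt_constraint_lift {α : ℝ → (Fin nx → ℝ) × (Fin ny → ℝ)} {t : ℝ}
    (hα : HasDerivAt α (reducedField f P Q φ t (α t)) t) (hφ : DifferentiableAt ℝ φ (t, α t))
    (hg : DifferentiableAt ℝ (uncurry₃ g) (t, (α t).1, (α t).2 + Q (φ (t, α t))))
    (hBQ : ∀ z, fderiv ℝ (fun y' => g t (α t).1 y') ((α t).2 + Q (φ (t, α t))) (Q z) = 0)
    (hP : P = .id ℝ _ - Q) (hzero : gTilde f g Q t (α t).1 (α t).2 (φ (t, α t)) = 0) :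
    HasDerivAt (fun s => g s (α s).1 ((α s).2 + Q (φ (s, α s)))) 0 t := by
  have hX : HasDerivAt (fun s => (α s).1) (f t (α t).1 ((α t).2 + Q (φ (t, α t)))) t := hα.fst
  obtain ⟨ψ, hψ⟩ : ∃ ψ, HasDerivAt (fun s => φ (s, α s)) ψ t :=
    ⟨_, hφ.hasFDerivAt.comp_hasDerivAt t ((hasDerivAt_id t).prodMk hα)⟩
  have hY : HasDerivAt (fun s => (α s).2 + Q (φ (s, α s))) (P (φ (t, α t)) + Q ψ) t :=
    hα.snd.add (Q.hasFDerivAt.comp_hasDerivAt t hψ)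
  convert hasDerivAt_constraint hg hX hY using 1
  rw [← hzero, gTilde]
  simp [hP, hBQ]

theorem exists_solution_of_reducedField_solution {Ω : Set (ℝ × (Fin nx → ℝ) × (Fin ny → ℝ))}
    (hΩ : IsOpen Ω) (hg : DifferentiableOn ℝ (uncurry₃ g) Ω)
    (hBQ : ∀ p ∈ Ω, ∀ z, fderiv ℝ (fun y' => g p.1 p.2.1 y') p.2.2 (Q z) = 0)
    (hP : P = .id ℝ _ - Q) {t₀ : ℝ} {z₀ : (Fin nx → ℝ) × (Fin ny → ℝ)} {v₀ : Fin ny → ℝ}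
    (hφ : ContDiffAt ℝ 1 φ (t₀, z₀)) (hφ₀ : φ (t₀, z₀) = v₀)
    (hzero : ∀ᶠ a in 𝓝 (t₀, z₀), gTilde f g Q a.1 a.2.1 a.2.2 (φ a) = 0)
    (hF : ContDiffAt ℝ 1 (uncurry (reducedField f P Q φ)) (t₀, z₀))
    {α : ℝ → (Fin nx → ℝ) × (Fin ny → ℝ)} (hα₀ : α t₀ = z₀)
    (hα : ∀ᶠ t in 𝓝 t₀, HasDerivAt α (reducedField f P Q φ t (α t)) t)
    (hp₀ : (t₀, z₀.1, z₀.2 + Q v₀) ∈ Ω) (hcons : g t₀ z₀.1 (z₀.2 + Q v₀) = 0) :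
    ∃ J : Set ℝ, t₀ ∈ J ∧ IsOpen J ∧ J.OrdConnected ∧
      ContDiffOn ℝ 1 (fun t => (α t).1) J ∧ ContDiffOn ℝ 1 (fun t => (α t).2 + Q (φ (t, α t))) J ∧
      (∀ t ∈ J, (t, (α t).1, (α t).2 + Q (φ (t, α t))) ∈ Ω) ∧
      (∀ t ∈ J, HasDerivAt (fun t => (α t).1) (f t (α t).1 ((α t).2 + Q (φ (t, α t)))) t) ∧
      ∀ t ∈ J, g t (α t).1 ((α t).2 + Q (φ (t, α t))) = 0 := by
  have hlift : ∀ᶠ a in 𝓝 (t₀, z₀), (a.1, a.2.1, a.2.2 + Q (φ a)) ∈ Ω := by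
    refine ContinuousAt.eventually_mem (by fun_prop) ?_
    simpa [hφ₀] using hΩ.mem_nhds hp₀
  have hcurve : Tendsto (fun t => (t, α t)) (𝓝 t₀) (𝓝 (t₀, z₀)) :=
    hα₀ ▸ continuousAt_id.prodMk hα.self_of_nhds.continuousAt
  obtain ⟨r, hr, hJ⟩ := Metric.eventually_nhds_iff_ball.1 (hα.and (hcurve.eventually
    ((hF.eventually (by simp)).and ((hφ.eventually (by simp)).and (hzero.and hlift)))))
  have hαC1 : ContDiffOn ℝ 1 α (Metric.ball t₀ r) :=
    contDiffOn_one_of_hasDerivAt Metric.isOpen_ball (fun t ht => (hJ t ht).1) fun t ht =>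
      ((hJ t ht).2.1.continuousAt.comp (f := fun s => (s, α s))
        (continuousAt_id.prodMk (hJ t ht).1.continuousAt)).continuousWithinAt
  have hconst : ∀ t ∈ Metric.ball t₀ r,
      HasDerivAt (fun s => g s (α s).1 ((α s).2 + Q (φ (s, α s)))) 0 t := fun t ht =>
    hasDerivAt_constraint_lift (hJ t ht).1 ((hJ t ht).2.2.1.differentiableAt one_ne_zero)
      (hg.differentiableAt (hΩ.mem_nhds (hJ t ht).2.2.2.2)) (hBQ _ (hJ t ht).2.2.2.2) hP
      (hJ t ht).2.2.2.1
  refine ⟨Metric.ball t₀ r, Metric.mem_ball_self hr, Metric.isOpen_ball,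
    Real.ball_eq_Ioo t₀ r ▸ ordConnected_Ioo, contDiff_fst.comp_contDiffOn hαC1, fun t ht => ?_,
    fun t ht => (hJ t ht).2.2.2.2,
    fun t ht => (hJ t ht).1.fst,
    fun t ht => ?_⟩
  · have hαt := hαC1.contDiffAt (Metric.isOpen_ball.mem_nhds ht)
    exact ((contDiffAt_snd.comp t hαt).add (Q.contDiff.contDiffAt.comp t
      ((hJ t ht).2.2.1.comp t (contDiffAt_id.prodMk hαt)))).contDiffWithinAt
  · rw [Metric.isOpen_ball.is_const_of_deriv_eq_zero (convex_ball t₀ r).isPreconnected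
      (fun s hs => (hconst s hs).differentiableAt.differentiableWithinAt)
      (fun s hs => (hconst s hs).deriv) ht (Metric.mem_ball_self hr), hα₀, hφ₀]
    exact hcons

theorem eventually_eq_lift_of_solution {Ω : Set (ℝ × (Fin nx → ℝ) × (Fin ny → ℝ))}
    (hΩ : IsOpen Ω) (hg : DifferentiableOn ℝ (uncurry₃ g) Ω)
    (hBQ : ∀ p ∈ Ω, ∀ z, fderiv ℝ (fun y' => g p.1 p.2.1 y') p.2.2 (Q z) = 0)
    (hQ : Q.comp Q = Q) (hP : P = .id ℝ _ - Q) {t₀ : ℝ} {z₀ : (Fin nx → ℝ) × (Fin ny → ℝ)}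
    {v₀ : Fin ny → ℝ}
    (hφeq : ∀ᶠ q in 𝓝 ((t₀, z₀), v₀), gTilde f g Q q.1.1 q.1.2.1 q.1.2.2 q.2 = 0 ↔ φ q.1 = q.2)
    (hF : ContDiffAt ℝ 1 (uncurry (reducedField f P Q φ)) (t₀, z₀))
    {α : ℝ → (Fin nx → ℝ) × (Fin ny → ℝ)} (hα₀ : α t₀ = z₀)
    (hα : ∀ᶠ t in 𝓝 t₀, HasDerivAt α (reducedField f P Q φ t (α t)) t)
    {X : ℝ → Fin nx → ℝ} {Y W : ℝ → Fin ny → ℝ} (hXY : ∀ᶠ t in 𝓝 t₀, (t, X t, Y t) ∈ Ω)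
    (hX : ∀ᶠ t in 𝓝 t₀, HasDerivAt X (f t (X t) (Y t)) t)
    (hY : ∀ᶠ t in 𝓝 t₀, HasDerivAt Y (W t) t) (hW : ContinuousAt W t₀)
    (hcons : ∀ᶠ t in 𝓝 t₀, g t (X t) (Y t) = 0)
    (hXY₀ : (X t₀, P (Y t₀)) = z₀) (hW₀ : P (W t₀) + Q (Y t₀) = v₀) :
    ∀ᶠ t in 𝓝 t₀, X t = (α t).1 ∧ Y t = (α t).2 + Q (φ (t, α t)) := by
  have hq : Tendsto (fun t => ((t, X t, P (Y t)), P (W t) + Q (Y t))) (𝓝 t₀)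
      (𝓝 ((t₀, z₀), v₀)) := by
    rw [← hW₀, ← hXY₀]
    have hXc := hX.self_of_nhds.continuousAt
    have hYc := hY.self_of_nhds.continuousAt
    exact (continuousAt_id.prodMk (hXc.prodMk (P.continuous.continuousAt.comp hYc))).prodMk
      ((P.continuous.continuousAt.comp hW).add (Q.continuous.continuousAt.comp hYc))
  have hφY : ∀ᶠ t in 𝓝 t₀, φ (t, X t, P (Y t)) = P (W t) + Q (Y t) := by
    filter_upwards [hq.eventually hφeq, hXY, hX, hY, hcons.eventually_nhds]
      with t hiff hΩt hXt hYt hct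
    refine hiff.1 ?_
    rw [gTilde_proj_eq (hBQ _ hΩt) hQ hP]
    exact hAux_add_fderiv_eq_zero (hg.differentiableAt (hΩ.mem_nhds hΩt)) hXt hYt hct
  have hβ : ∀ᶠ t in 𝓝 t₀,
      HasDerivAt (fun s => (X s, P (Y s))) (reducedField f P Q φ t (X t, P (Y t))) t := by
    filter_upwards [hφY, hX, hY] with t hφt hXt hYt
    simp only [reducedField, hφt, ContinuousLinearMap.proj_add_apply_eq_self hQ hP,
      ContinuousLinearMap.proj_apply_proj_add_apply hQ hP]
    exact hXt.prodMk (P.hasFDerivAt.comp_hasDerivAt t hYt)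
  filter_upwards [ODE_solution_unique_of_contDiffAt hF hβ hα hXY₀ hα₀, hφY]
    with t hβt hφt
  rw [← hβt, hφt, ContinuousLinearMap.proj_add_apply_eq_self hQ hP]
  exact ⟨rfl, rfl⟩

end Reduction

theorem dae_index_two_existence_uniqueness_general (nx ny : ℕ)
    (I : Set ℝ) (hIopen : IsOpen I)
    (D₁ : Set (Fin nx → ℝ)) (hD₁ : IsOpen D₁)
    (D₂ : Set (Fin ny → ℝ)) (hD₂ : IsOpen D₂)
    (f : ℝ → (Fin nx → ℝ) → (Fin ny → ℝ) → (Fin nx → ℝ))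
    (g : ℝ → (Fin nx → ℝ) → (Fin ny → ℝ) → (Fin ny → ℝ))
    (hf : ContDiffOn ℝ 1 (fun p : ℝ × (Fin nx → ℝ) × (Fin ny → ℝ) =>
      f p.1 p.2.1 p.2.2) (I ×ˢ D₁ ×ˢ D₂))
    (hg : ContDiffOn ℝ 2 (fun p : ℝ × (Fin nx → ℝ) × (Fin ny → ℝ) =>
      g p.1 p.2.1 p.2.2) (I ×ˢ D₁ ×ˢ D₂))
    -- the kernel of `∂_y g` is a fixed subspace `K` (assumption (A2))
    (K : Submodule ℝ (Fin ny → ℝ))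
    (hker : ∀ t ∈ I, ∀ x ∈ D₁, ∀ y ∈ D₂,
      LinearMap.ker (fderiv ℝ (fun y' => g t x y') y : (Fin ny → ℝ) →ₗ[ℝ] (Fin ny → ℝ)) = K)
    -- `Q` is a linear projection onto `K`, and `P = Id − Q`
    (Q : (Fin ny → ℝ) →L[ℝ] (Fin ny → ℝ)) (hQproj : Q.comp Q = Q)
    (hQrange : LinearMap.range (Q : (Fin ny → ℝ) →ₗ[ℝ] (Fin ny → ℝ)) = K)
    (P : (Fin ny → ℝ) →L[ℝ] (Fin ny → ℝ))
    (hP : P = ContinuousLinearMap.id ℝ (Fin ny → ℝ) - Q)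
    -- consistent initial values
    (t₀ : ℝ) (ht₀ : t₀ ∈ I)
    (x₀ : Fin nx → ℝ) (hx₀ : x₀ ∈ D₁)
    (y₀ : Fin ny → ℝ) (hy₀ : y₀ ∈ D₂)
    (hcons : g t₀ x₀ y₀ = 0)
    (w₀ : Fin ny → ℝ)
    (hw₀ : hAux f g t₀ x₀ y₀ + fderiv ℝ (fun y' => g t₀ x₀ y') y₀ w₀ = 0)
    (u₀ : Fin ny → ℝ) (hu₀ : u₀ = P y₀)
    (v₀ : Fin ny → ℝ) (hv₀ : v₀ = P w₀ + Q y₀)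
    -- invertibility of `∂_v g̃` at `(t₀, x₀, u₀, v₀)`
    (hinv : Function.Bijective ⇑(fderiv ℝ (fun v => gTilde f g Q t₀ x₀ u₀ v) v₀)) :
    ∃ (J : Set ℝ) (x : ℝ → Fin nx → ℝ) (y : ℝ → Fin ny → ℝ),
      t₀ ∈ J ∧ J ⊆ I ∧ IsOpen J ∧ J.OrdConnected ∧
      ContDiffOn ℝ 1 x J ∧ ContDiffOn ℝ 1 y J ∧
      (∀ t ∈ J, x t ∈ D₁) ∧ (∀ t ∈ J, y t ∈ D₂) ∧
      (∀ t ∈ J, HasDerivAt x (f t (x t) (y t)) t) ∧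
      (∀ t ∈ J, g t (x t) (y t) = 0) ∧
      x t₀ = x₀ ∧ y t₀ = y₀ ∧
      (∀ (J' : Set ℝ) (x' : ℝ → Fin nx → ℝ) (y' : ℝ → Fin ny → ℝ),
        t₀ ∈ J' → J' ⊆ I → IsOpen J' → J'.OrdConnected →
        ContDiffOn ℝ 1 x' J' → ContDiffOn ℝ 1 y' J' →
        (∀ t ∈ J', x' t ∈ D₁) → (∀ t ∈ J', y' t ∈ D₂) →
        (∀ t ∈ J', HasDerivAt x' (f t (x' t) (y' t)) t) →
        (∀ t ∈ J', g t (x' t) (y' t) = 0) →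
        x' t₀ = x₀ → y' t₀ = y₀ →
        ∀ᶠ t in nhds t₀, x' t = x t ∧ y' t = y t) := by
  set Ω := I ×ˢ D₁ ×ˢ D₂
  have hΩ : IsOpen Ω := hIopen.prod (hD₁.prod hD₂)
  have hkerQ (p) (hp : p ∈ Ω) := (hker _ hp.1 _ hp.2.1 _ hp.2.2).trans hQrange.symm
  have hBQ (p) (hp : p ∈ Ω) := ContinuousLinearMap.apply_eq_zero_of_ker_eq_range (hkerQ p hp)
  have hp₀ : (t₀, x₀, y₀) ∈ Ω := ⟨ht₀, hx₀, hy₀⟩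
  have hsplit : u₀ + Q v₀ = y₀ := by
    rw [hu₀, hv₀, ContinuousLinearMap.proj_add_apply_eq_self hQproj hP]
  have hf₀ : ContDiffAt ℝ 1 (uncurry₃ f) (t₀, x₀, u₀ + Q v₀) :=
    hsplit ▸ hf.contDiffAt (hΩ.mem_nhds hp₀)
  obtain ⟨φ, hφ, hφ₀, hzero, hφeq⟩ := exists_implicitFunction_gTilde hf₀
    (hsplit ▸ hg.contDiffAt (hΩ.mem_nhds hp₀)) hinv
    (by rw [hu₀, hv₀, gTilde_proj_eq (hBQ _ hp₀) hQproj hP, hw₀])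
  have hF : ContDiffAt ℝ 1 (uncurry (reducedField f P Q φ)) (t₀, x₀, u₀) :=
    contDiffAt_uncurry_reducedField (hφ₀ ▸ hf₀) hφ
  obtain ⟨α, hα₀, hα⟩ := hF.exists_eq_eventually_hasDerivAt
  have hgd : DifferentiableOn ℝ (uncurry₃ g) Ω := hg.differentiableOn two_ne_zero
  obtain ⟨J, ht₀J, hJ, hJI, hxC1, hyC1, hJΩ, hx, hxg⟩ :=
    exists_solution_of_reducedField_solution hΩ hgd hBQ hP hφ hφ₀ hzero hF hα₀ hα
      (hsplit ▸ hp₀) (hsplit ▸ hcons)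
  refine ⟨J, _, _, ht₀J, fun t ht => (hJΩ t ht).1, hJ, hJI, hxC1, hyC1,
    fun t ht => (hJΩ t ht).2.1, fun t ht => (hJΩ t ht).2.2, hx, hxg, by rw [hα₀],
    by rw [hα₀, hφ₀, hsplit], ?_⟩
  intro J' x' y' ht₀J' hJ'I hJ' _ _ hy'C1 hx'D hy'D hx' hg' hx'₀ hy'₀
  have hJ'n := hJ'.mem_nhds ht₀J'
  have hy' (t) (ht : t ∈ J') : HasDerivAt y' (deriv y' t) t :=
    ((hy'C1.differentiableOn one_ne_zero).differentiableAt (hJ'.mem_nhds ht)).hasDerivAt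
  have hΩ' (t) (ht : t ∈ J') : (t, x' t, y' t) ∈ Ω := ⟨hJ'I ht, hx'D t ht, hy'D t ht⟩
  have hPw : P (deriv y' t₀) = P w₀ :=
    proj_eq_of_hAux_add_fderiv_eq_zero (hgd.differentiableAt (hΩ.mem_nhds (hΩ' t₀ ht₀J')))
      (hx' t₀ ht₀J') (hy' t₀ ht₀J') (eventually_of_mem hJ'n hg') (hkerQ _ (hΩ' t₀ ht₀J'))
      hQproj hP (by rwa [hx'₀, hy'₀])
  exact eventually_eq_lift_of_solution hΩ hgd hBQ hQproj hP hφeq hF hα₀ hα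
    (eventually_of_mem hJ'n hΩ') (eventually_of_mem hJ'n hx') (eventually_of_mem hJ'n hy')
    ((hy'C1.continuousOn_deriv_of_isOpen hJ' le_rfl).continuousAt hJ'n)
    (eventually_of_mem hJ'n hg') (by rw [hx'₀, hy'₀, hu₀]) (by rw [hPw, hy'₀, hv₀])

/-- **Existence and local uniqueness for index-2 semi-explicit DAEs** with
constant kernel of `∂_y g`: if `(x₀,y₀)` is a consistent initial value (i.e.
`g(t₀,x₀,y₀) = 0` and the hidden constraint `h(t₀,x₀,y₀) + ∂_y g(t₀,x₀,y₀) w₀ = 0`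
has a solution `w₀`) and the derivative `∂_v g̃` is invertible at the point
`(t₀, x₀, u₀, v₀)` built from the regular and singular variables `u₀ = P y₀`,
`v₀ = P w₀ + Q y₀`, then the DAE has a locally unique `C¹` solution through
`(x₀, y₀)`. -/
theorem dae_index_two_existence_uniqueness (nx ny : ℕ)
    (I : Set ℝ) (hIopen : IsOpen I) (hIint : I.OrdConnected)
    (D₁ : Set (Fin nx → ℝ)) (hD₁ : IsOpen D₁)
    (D₂ : Set (Fin ny → ℝ)) (hD₂ : IsOpen D₂)
    (f : ℝ → (Fin nx → ℝ) → (Fin ny → ℝ) → (Fin nx → ℝ))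
    (g : ℝ → (Fin nx → ℝ) → (Fin ny → ℝ) → (Fin ny → ℝ))
    (hf : ContDiffOn ℝ 1 (fun p : ℝ × (Fin nx → ℝ) × (Fin ny → ℝ) =>
      f p.1 p.2.1 p.2.2) (I ×ˢ D₁ ×ˢ D₂))
    (hfLip : ∃ L : NNReal, ∀ t ∈ I, LipschitzOnWith L
      (fun p : (Fin nx → ℝ) × (Fin ny → ℝ) => f t p.1 p.2) (D₁ ×ˢ D₂))
    (hg : ContDiffOn ℝ 2 (fun p : ℝ × (Fin nx → ℝ) × (Fin ny → ℝ) =>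
      g p.1 p.2.1 p.2.2) (I ×ˢ D₁ ×ˢ D₂))
    -- the kernel of `∂_y g` is a fixed subspace `K` (assumption (A2))
    (K : Submodule ℝ (Fin ny → ℝ))
    (hker : ∀ t ∈ I, ∀ x ∈ D₁, ∀ y ∈ D₂,
      LinearMap.ker (fderiv ℝ (fun y' => g t x y') y : (Fin ny → ℝ) →ₗ[ℝ] (Fin ny → ℝ)) = K)
    -- `Q` is a linear projection onto `K`, and `P = Id − Q`
    (Q : (Fin ny → ℝ) →L[ℝ] (Fin ny → ℝ)) (hQproj : Q.comp Q = Q)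
    (hQrange : LinearMap.range (Q : (Fin ny → ℝ) →ₗ[ℝ] (Fin ny → ℝ)) = K)
    (P : (Fin ny → ℝ) →L[ℝ] (Fin ny → ℝ))
    (hP : P = ContinuousLinearMap.id ℝ (Fin ny → ℝ) - Q)
    -- consistent initial values
    (t₀ : ℝ) (ht₀ : t₀ ∈ I)
    (x₀ : Fin nx → ℝ) (hx₀ : x₀ ∈ D₁)
    (y₀ : Fin ny → ℝ) (hy₀ : y₀ ∈ D₂)
    (hcons : g t₀ x₀ y₀ = 0)
    (w₀ : Fin ny → ℝ)
    (hw₀ : hAux f g t₀ x₀ y₀ + fderiv ℝ (fun y' => g t₀ x₀ y') y₀ w₀ = 0)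
    (u₀ : Fin ny → ℝ) (hu₀ : u₀ = P y₀)
    (v₀ : Fin ny → ℝ) (hv₀ : v₀ = P w₀ + Q y₀)
    -- invertibility of `∂_v g̃` at `(t₀, x₀, u₀, v₀)`
    (hinv : Function.Bijective ⇑(fderiv ℝ (fun v => gTilde f g Q t₀ x₀ u₀ v) v₀)) :
    ∃ (J : Set ℝ) (x : ℝ → Fin nx → ℝ) (y : ℝ → Fin ny → ℝ),
      t₀ ∈ J ∧ J ⊆ I ∧ IsOpen J ∧ J.OrdConnected ∧
      ContDiffOn ℝ 1 x J ∧ ContDiffOn ℝ 1 y J ∧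
      (∀ t ∈ J, x t ∈ D₁) ∧ (∀ t ∈ J, y t ∈ D₂) ∧
      (∀ t ∈ J, HasDerivAt x (f t (x t) (y t)) t) ∧
      (∀ t ∈ J, g t (x t) (y t) = 0) ∧
      x t₀ = x₀ ∧ y t₀ = y₀ ∧
      (∀ (J' : Set ℝ) (x' : ℝ → Fin nx → ℝ) (y' : ℝ → Fin ny → ℝ),
        t₀ ∈ J' → J' ⊆ I → IsOpen J' → J'.OrdConnected →
        ContDiffOn ℝ 1 x' J' → ContDiffOn ℝ 1 y' J' →
        (∀ t ∈ J', x' t ∈ D₁) → (∀ t ∈ J', y' t ∈ D₂) →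
        (∀ t ∈ J', HasDerivAt x' (f t (x' t) (y' t)) t) →
        (∀ t ∈ J', g t (x' t) (y' t) = 0) →
        x' t₀ = x₀ → y' t₀ = y₀ →
        ∀ᶠ t in nhds t₀, x' t = x t ∧ y' t = y t) :=
  dae_index_two_existence_uniqueness_general nx ny I hIopen D₁ hD₁ D₂ hD₂ f g hf hg K hker Q hQproj
    hQrange P hP t₀ ht₀ x₀ hx₀ y₀ hy₀ hcons w₀ hw₀ u₀ hu₀ v₀ hv₀ hinv
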